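/- Let k \ge 2 be an integer, z \in \mathbb{C} \setminus \mathbb{Z}, and 0 < t < 1. Then \sum_{n \in \mathbb{Z}} e^{2\pi i n t}/(2\pi i (n+z))^k = e^{-2\pi i z t} \cdot \mathrm{Res}_{u=0} \frac{e^{tu}}{u^k (1 - e^{-2\pi i z + u})} du, i.e. equals e^{-2\pi i z t} times the coefficient of u^{k-1} in the Taylor expansion at u = 0 of e^{tu}/(1 - e^{-2\pi i z + u}). -/

import Mathlib

/-!
Put `a = -2πiz` and let `C x` be the coefficient of `u^(k-1)` in `e^(xu) / (1 - e^(a+u))`.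
Since `e^a e^u / (1 - e^(a+u)) = 1 / (1 - e^(a+u)) - 1` and `k - 1 ≥ 1`, we have `C 0 = e^a C 1`,
so `f x = e^(ax) C x` is a continuous function on the circle `ℝ/ℤ`. To get its Fourier
coefficients, write the Taylor coefficient as a Cauchy integral and swap it with the integral
over `x`: for `w = -2πi(n+z)` we have `e^w = e^a`, so
`∫₀¹ e^(wx) e^(xu) / (1 - e^(a+u)) dx = 1 / (-w - u)`, and the coefficient of `u^(k-1)` in this
is `1 / (-w)^k = 1 / (2πi(n+z))^k`. For `k ≥ 2` these coefficients are summable, so the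
Fourier series of `f` converges to `f t`.
-/

open scoped Real Topology
open Complex Metric Set Filter MeasureTheory intervalIntegral

section CauchyParametric

variable {c : ℂ} {R : ℝ}

lemma continuousOn_circleMap_cauchyIntegrand {X : Type*} [TopologicalSpace X] {F : X → ℂ → ℂ}
    {s : Set X} (hR : 0 < R) (n : ℕ)
    (hF : ContinuousOn (Function.uncurry F) (s ×ˢ sphere c R)) :
    ContinuousOn (fun p : X × ℝ => deriv (circleMap c R) p.2 •
      (1 / (circleMap c R p.2 - c) ^ (n + 1)) • F p.1 (circleMap c R p.2)) (s ×ˢ univ) := by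
  have hγ : Continuous fun p : X × ℝ => circleMap c R p.2 :=
    (continuous_circleMap c R).comp continuous_snd
  have hF' : ContinuousOn (fun p : X × ℝ => F p.1 (circleMap c R p.2)) (s ×ˢ univ) :=
    hF.comp (continuous_fst.prodMk hγ).continuousOn
      fun p hp => ⟨hp.1, circleMap_mem_sphere c hR.le p.2⟩
  have hγc : ∀ p : X × ℝ, (circleMap c R p.2 - c) ^ (n + 1) ≠ 0 := fun p =>
    pow_ne_zero _ (sub_ne_zero.2 (circleMap_ne_center hR.ne'))
  simp only [deriv_circleMap]
  exact (((continuous_circleMap 0 R).comp continuous_snd).mul continuous_const).continuousOn.smul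
    ((continuous_const.div ((hγ.sub continuous_const).pow _) hγc).continuousOn.smul hF')

lemma continuous_iteratedDeriv_of_differentiableOn_closedBall {X : Type*} [TopologicalSpace X]
    {F : X → ℂ → ℂ} (hR : 0 < R) (n : ℕ)
    (hF : ∀ x, DifferentiableOn ℂ (F x) (closedBall c R))
    (hFc : ContinuousOn (Function.uncurry F) (univ ×ˢ sphere c R)) :
    Continuous fun x => iteratedDeriv n (F x) c := by
  have hκ : (2 * π * I / n.factorial : ℂ) ≠ 0 :=
    div_ne_zero two_pi_I_ne_zero (Nat.cast_ne_zero.2 n.factorial_ne_zero)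
  have hcauchy : (fun x => iteratedDeriv n (F x) c) =
      fun x => (2 * π * I / n.factorial : ℂ)⁻¹ •
        ∮ u in C(c, R), (1 / (u - c) ^ (n + 1)) • F x u := by
    funext x
    rw [(hF x).circleIntegral_one_div_sub_center_pow_smul hR n, inv_smul_smul₀ hκ]
  rw [hcauchy]
  have hcont : Continuous fun x => ∮ u in C(c, R), (1 / (u - c) ^ (n + 1)) • F x u := by
    refine continuous_parametric_intervalIntegral_of_continuous' ?_ _ _
    rw [← continuousOn_univ, ← univ_prod_univ]
    exact continuousOn_circleMap_cauchyIntegrand hR n hFc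
  exact hcont.const_smul (2 * π * I / n.factorial : ℂ)⁻¹

lemma intervalIntegral_iteratedDeriv_eq {F : ℝ → ℂ → ℂ} {G : ℂ → ℂ} {a b : ℝ} (hR : 0 < R)
    (n : ℕ) (hF : ∀ x ∈ uIcc a b, DifferentiableOn ℂ (F x) (closedBall c R))
    (hFc : ContinuousOn (Function.uncurry F) (uIcc a b ×ˢ sphere c R))
    (hG : DifferentiableOn ℂ G (closedBall c R))
    (hFG : ∀ u ∈ sphere c R, ∫ x in a..b, F x u = G u) :
    ∫ x in a..b, iteratedDeriv n (F x) c = iteratedDeriv n G c := by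
  have hκ : (2 * π * I / n.factorial : ℂ) ≠ 0 :=
    div_ne_zero two_pi_I_ne_zero (Nat.cast_ne_zero.2 n.factorial_ne_zero)
  have hint : IntegrableOn (Function.uncurry fun x θ => deriv (circleMap c R) θ •
      (1 / (circleMap c R θ - c) ^ (n + 1)) • F x (circleMap c R θ))
      (uIoc a b ×ˢ uIoc 0 (2 * π)) := by
    exact ((continuousOn_circleMap_cauchyIntegrand hR n hFc).mono
      (prod_mono_right (subset_univ _))).integrableOn_compact
      (isCompact_uIcc.prod isCompact_uIcc) |>.mono_set
      (prod_mono uIoc_subset_uIcc uIoc_subset_uIcc)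
  refine mul_left_cancel₀ hκ ?_
  calc (2 * π * I / n.factorial : ℂ) * ∫ x in a..b, iteratedDeriv n (F x) c
      = ∫ x in a..b, ∮ u in C(c, R), (1 / (u - c) ^ (n + 1)) • F x u := by
        rw [← intervalIntegral.integral_const_mul]
        exact integral_congr fun x hx =>
          ((hF x hx).circleIntegral_one_div_sub_center_pow_smul hR n).symm
    _ = ∮ u in C(c, R), (1 / (u - c) ^ (n + 1)) • ∫ x in a..b, F x u := by
        simp only [circleIntegral]
        rw [intervalIntegral_intervalIntegral_swap hint]
        simp only [intervalIntegral.integral_smul]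
    _ = ∮ u in C(c, R), (1 / (u - c) ^ (n + 1)) • G u :=
        circleIntegral.integral_congr hR.le fun u hu => by rw [hFG u hu]
    _ = (2 * π * I / n.factorial : ℂ) * iteratedDeriv n G c :=
        hG.circleIntegral_one_div_sub_center_pow_smul hR n

end CauchyParametric

lemma iteratedDeriv_inv_const_sub_zero (v : ℂ) (n : ℕ) :
    iteratedDeriv n (fun u => (v - u)⁻¹) 0 = n.factorial / v ^ (n + 1) := by
  have h := congr_fun (iter_deriv_inv_linear_sub n (-1 : ℂ) (-v)) 0
  simp only [mul_zero, zero_sub, neg_neg] at h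
  rw [iteratedDeriv_eq_iterate, show (fun u => (v - u)⁻¹) = fun u : ℂ => (-1 * u - -v)⁻¹ by
    funext u; ring_nf, h, show (-1 - n : ℤ) = -((n + 1 : ℕ) : ℤ) by push_cast; ring, zpow_neg,
    zpow_natCast]
  have hsign : ((-1 : ℂ)) ^ n * (-1) ^ n = 1 := by rw [← mul_pow]; norm_num
  linear_combination (n.factorial / v ^ (n + 1)) * hsign

lemma hasSum_mul_exp_of_integral_eq {f : ℝ → ℂ} {b : ℤ → ℂ}
    (hf : ContinuousOn f (Icc 0 1)) (hf01 : f 0 = f 1)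
    (hb : ∀ n : ℤ, ∫ x in (0 : ℝ)..1, exp (-(2 * π * I * n * x)) * f x = b n)
    (hs : Summable b) {t : ℝ} (ht : t ∈ Ico 0 1) :
    HasSum (fun n : ℤ => b n * exp (2 * π * I * n * t)) (f t) := by
  have : Fact ((0 : ℝ) < 1) := ⟨one_pos⟩
  let F : C(AddCircle (1 : ℝ), ℂ) :=
    ⟨AddCircle.liftIco 1 0 f, AddCircle.liftIco_zero_continuous hf01 hf⟩
  have hcoeff : fourierCoeff F = b := by
    funext n
    rw [ContinuousMap.coe_mk, fourierCoeff_liftIco_eq, fourierCoeffOn_eq_integral, ← hb n]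
    simp only [fourier_coe_apply, zero_add, sub_zero, div_one, one_smul, smul_eq_mul, Int.cast_neg,
      ofReal_one]
    refine integral_congr fun x _ => ?_
    ring_nf
  have hF := has_pointwise_sum_fourier_series_of_summable (hcoeff ▸ hs) (t : AddCircle (1 : ℝ))
  simp only [hcoeff, fourier_coe_apply, ofReal_one, div_one, smul_eq_mul] at hF
  rwa [ContinuousMap.coe_mk, AddCircle.liftIco_coe_apply (by rwa [zero_add])] at hF

/-- Up to the factor `-u`, the generating function `u e^(xu) / (e^(a+u) - 1)` of the
Apostol–Bernoulli polynomials with parameter `e^a`. -/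
noncomputable def apostolBernoulliGen (a : ℂ) (x : ℝ) (u : ℂ) : ℂ :=
  exp (x * u) / (1 - exp (a + u))

lemma eventually_exp_add_ne_one {a : ℂ} (ha : exp a ≠ 1) :
    ∀ᶠ u in 𝓝 (0 : ℂ), exp (a + u) ≠ 1 :=
  (continuous_exp.comp (continuous_const.add continuous_id)).continuousAt.eventually_ne
    (by simpa using ha)

lemma exp_neg_two_pi_I_mul_ne_one {z : ℂ} (hz : ∀ m : ℤ, z ≠ m) : exp (-(2 * π * I) * z) ≠ 1 :=
  fun h => by
    obtain ⟨m, hm⟩ := exp_eq_one_iff.1 h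
    refine hz (-m) ?_
    have := mul_right_cancel₀ two_pi_I_ne_zero
      (show -z * (2 * π * I) = m * (2 * π * I) by linear_combination hm)
    push_cast
    linear_combination -this

lemma summable_one_div_two_pi_I_mul_add_pow {k : ℕ} (hk : 2 ≤ k) (z : ℂ) :
    Summable fun n : ℤ => 1 / (2 * π * I * (n + z)) ^ k := by
  refine ((EisensteinSeries.linear_right_summable z 1 (k := k) (by exact_mod_cast hk)).mul_left
    ((2 * π * I) ^ k)⁻¹).congr fun n => ?_
  simp only [Int.cast_one, one_mul, zpow_natCast, mul_pow, one_div, mul_inv, add_comm z]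

namespace apostolBernoulliGen

variable {a : ℂ} {s : Set ℂ}

lemma continuousOn (ha : ∀ u ∈ s, exp (a + u) ≠ 1) :
    ContinuousOn (Function.uncurry (apostolBernoulliGen a)) (univ ×ˢ s) :=
  ContinuousOn.div (by fun_prop) (by fun_prop) fun p hp => sub_ne_zero.2 (ha p.2 hp.2).symm

lemma differentiableOn (x : ℝ) (ha : ∀ u ∈ s, exp (a + u) ≠ 1) :
    DifferentiableOn ℂ (apostolBernoulliGen a x) s :=
  DifferentiableOn.div (by fun_prop) (by fun_prop) fun u hu => sub_ne_zero.2 (ha u hu).symm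

lemma integral_exp_mul {w u : ℂ} (hw : exp w = exp a) (hu : exp (a + u) ≠ 1) :
    ∫ x in (0 : ℝ)..1, exp (w * x) * apostolBernoulliGen a x u = (-w - u)⁻¹ := by
  have hwu : exp (w + u) = exp (a + u) := by rw [exp_add, exp_add, hw]
  have hwu0 : w + u ≠ 0 := fun h => hu (by rw [← hwu, h, exp_zero])
  have hwu0' : -w - u ≠ 0 := by rw [← neg_add']; exact neg_ne_zero.2 hwu0
  have hden : 1 - exp (a + u) ≠ 0 := sub_ne_zero.2 hu.symm
  have hintegrand : ∀ x : ℝ, exp (w * x) * apostolBernoulliGen a x u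
      = exp ((w + u) * x) / (1 - exp (a + u)) := fun x => by
    rw [apostolBernoulliGen, mul_comm (x : ℂ) u, ← mul_div_assoc, ← exp_add, ← add_mul]
  rw [integral_congr fun x _ => hintegrand x, intervalIntegral.integral_div,
    integral_exp_mul_complex hwu0]
  simp only [ofReal_one, ofReal_zero, mul_one, mul_zero, exp_zero, hwu]
  field_simp
  ring

lemma iteratedDeriv_zero_eq {n : ℕ} (hn : 0 < n) (ha : exp a ≠ 1) :
    iteratedDeriv n (apostolBernoulliGen a 0) 0
      = exp a * iteratedDeriv n (apostolBernoulliGen a 1) 0 := by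
  have hnear : (fun u => exp a * apostolBernoulliGen a 1 u) =ᶠ[𝓝 0]
      fun u => -1 + apostolBernoulliGen a 0 u := by
    filter_upwards [eventually_exp_add_ne_one ha] with u hu
    have hden : 1 - exp (a + u) ≠ 0 := sub_ne_zero.2 hu.symm
    simp only [apostolBernoulliGen, ofReal_zero, ofReal_one, zero_mul, one_mul, exp_zero]
    field_simp
    rw [exp_add]
    ring
  rw [← iteratedDeriv_const_mul_field, hnear.iteratedDeriv_eq, iteratedDeriv_const_add hn]

lemma integral_exp_mul_iteratedDeriv {w : ℂ} {R : ℝ} (hw : exp w = exp a) (hR : 0 < R)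
    (ha : ∀ u ∈ closedBall 0 R, exp (a + u) ≠ 1) (n : ℕ) :
    ∫ x in (0 : ℝ)..1, exp (w * x) * iteratedDeriv n (apostolBernoulliGen a x) 0
      = n.factorial / (-w) ^ (n + 1) := by
  have hwu : ∀ u ∈ closedBall (0 : ℂ) R, -w - u ≠ 0 := fun u hu h => ha u hu <| by
    rw [exp_add, ← hw, ← exp_add, show w + u = 0 by linear_combination -h, exp_zero]
  simp_rw [← iteratedDeriv_const_mul_field]
  rw [intervalIntegral_iteratedDeriv_eq (G := fun u => (-w - u)⁻¹) hR n
    (fun x _ => (differentiableOn x ha).const_mul _)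
    ((Continuous.continuousOn (by fun_prop)).mul ((continuousOn ha).mono
      (prod_mono (subset_univ _) sphere_subset_closedBall)))
    ((differentiableOn_const _).sub differentiableOn_id |>.inv hwu)
    fun u hu => integral_exp_mul hw (ha u (sphere_subset_closedBall hu))]
  exact iteratedDeriv_inv_const_sub_zero (-w) n

end apostolBernoulliGen

noncomputable def twistedBernoulliFun (z : ℂ) (k : ℕ) (x : ℝ) : ℂ :=
  exp (-(2 * π * I) * z * x) *
    (iteratedDeriv (k - 1) (apostolBernoulliGen (-(2 * π * I) * z) x) 0 / (k - 1).factorial)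

namespace twistedBernoulliFun

variable {z : ℂ} {k : ℕ}

lemma continuous (hz : ∀ m : ℤ, z ≠ m) : Continuous (twistedBernoulliFun z k) := by
  obtain ⟨R, hR, haR⟩ := nhds_basis_closedBall.eventually_iff.1
    (eventually_exp_add_ne_one (exp_neg_two_pi_I_mul_ne_one hz))
  exact (by fun_prop : Continuous fun x : ℝ => exp (-(2 * π * I) * z * x)).mul
    ((continuous_iteratedDeriv_of_differentiableOn_closedBall hR (k - 1)
      (fun x => apostolBernoulliGen.differentiableOn x haR)
      ((apostolBernoulliGen.continuousOn haR).mono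
        (prod_mono subset_rfl sphere_subset_closedBall))).div_const _)

lemma apply_zero_eq_apply_one (hz : ∀ m : ℤ, z ≠ m) (hk : 2 ≤ k) :
    twistedBernoulliFun z k 0 = twistedBernoulliFun z k 1 := by
  simp only [twistedBernoulliFun, ofReal_zero, ofReal_one, mul_zero, mul_one, exp_zero, one_mul,
    apostolBernoulliGen.iteratedDeriv_zero_eq (by omega : 0 < k - 1)
      (exp_neg_two_pi_I_mul_ne_one hz), mul_div_assoc]

lemma integral_exp_mul (hz : ∀ m : ℤ, z ≠ m) (hk : 1 ≤ k) (n : ℤ) :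
    ∫ x in (0 : ℝ)..1, exp (-(2 * π * I * n * x)) * twistedBernoulliFun z k x
      = 1 / (2 * π * I * (n + z)) ^ k := by
  set a : ℂ := -(2 * π * I) * z
  obtain ⟨R, hR, haR⟩ := nhds_basis_closedBall.eventually_iff.1
    (eventually_exp_add_ne_one (exp_neg_two_pi_I_mul_ne_one hz))
  set w : ℂ := -(2 * π * I * (n + z))
  have hw : exp w = exp a := by
    rw [show w = a + (-n : ℤ) * (2 * π * I) by push_cast; ring, exp_add,
      exp_int_mul_two_pi_mul_I, mul_one]
  calc ∫ x in (0 : ℝ)..1, exp (-(2 * π * I * n * x)) * twistedBernoulliFun z k x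
      = (∫ x in (0 : ℝ)..1, exp (w * x) * iteratedDeriv (k - 1) (apostolBernoulliGen a x) 0)
          / (k - 1).factorial := by
        rw [← intervalIntegral.integral_div]
        refine integral_congr fun x _ => ?_
        simp only [twistedBernoulliFun, w, a, ← mul_assoc, ← exp_add, mul_div_assoc]
        ring_nf
    _ = 1 / (2 * π * I * (n + z)) ^ k := by
        rw [apostolBernoulliGen.integral_exp_mul_iteratedDeriv hw hR haR, Nat.sub_add_cancel hk,
          neg_neg, div_div_cancel_left' (Nat.cast_ne_zero.2 (k - 1).factorial_ne_zero), one_div]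

end twistedBernoulliFun

/-- For an integer `k ≥ 2`, `z ∈ ℂ \ ℤ` and `0 < t < 1`,
`∑_{n∈ℤ} e^{2πint}/(2πi(n+z))^k` equals `e^{-2πizt}` times the coefficient of `u^{k-1}`
in the Taylor expansion at `u = 0` of `e^{tu}/(1 - e^{-2πiz+u})`, i.e.
`e^{-2πizt} · (d/du)^{k-1}|_{u=0} [e^{tu}/(1-e^{-2πiz+u})] / (k-1)!`. -/
theorem affine_bernoulli_series_k
    (k : ℕ) (hk : 2 ≤ k)
    (z : ℂ) (hz : ∀ m : ℤ, z ≠ (m : ℂ))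
    (t : ℝ) (h0 : 0 < t) (h1 : t < 1) :
    Summable (fun n : ℤ =>
      Complex.exp (2 * (Real.pi : ℂ) * Complex.I * (n : ℂ) * (t : ℂ)) /
        (2 * (Real.pi : ℂ) * Complex.I * ((n : ℂ) + z)) ^ k) ∧
    (∑' n : ℤ,
      Complex.exp (2 * (Real.pi : ℂ) * Complex.I * (n : ℂ) * (t : ℂ)) /
        (2 * (Real.pi : ℂ) * Complex.I * ((n : ℂ) + z)) ^ k)
      = Complex.exp (-(2 * (Real.pi : ℂ) * Complex.I) * z * (t : ℂ)) *
          (iteratedDeriv (k - 1)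
            (fun u : ℂ => Complex.exp ((t : ℂ) * u) /
              (1 - Complex.exp (-(2 * (Real.pi : ℂ) * Complex.I) * z + u))) 0 /
            (Nat.factorial (k - 1) : ℂ)) := by
  have H := hasSum_mul_exp_of_integral_eq (twistedBernoulliFun.continuous hz).continuousOn
    (twistedBernoulliFun.apply_zero_eq_apply_one hz hk)
    (twistedBernoulliFun.integral_exp_mul hz (by omega))
    (summable_one_div_two_pi_I_mul_add_pow hk z) ⟨h0.le, h1⟩
  simp only [one_div_mul_eq_div] at H
  exact ⟨H.summable, H.tsum_eq⟩
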